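/- arXiv:2408.04869 — 2 statements merged into one kernel-verified Lean document; each statement's English description precedes it below -/
import Mathlib

section
/- There exists a constant C > 0 such that for every integer K ≥ 2 and every α > 0, if X₁, …, X_K are i.i.d. standard Gaussian random variables with order statistics X_(1) ≥ X_(2) ≥ … ≥ X_(K), then P(X_(1) − X_(2) ≤ α) ≤ C·(ln K)^{3/2}·α. -/
open Real MeasureTheory ProbabilityTheory Set

lemma gpdf_eq (x : ℝ) : gaussianPDFReal 0 1 x = (Real.sqrt (2*π))⁻¹ * rexp (-x^2/2) := by
  simp [gaussianPDFReal]

lemma gpdf_nonneg (x : ℝ) : 0 ≤ gaussianPDFReal 0 1 x := gaussianPDFReal_nonneg 0 1 x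

lemma gpdf_anti {s t : ℝ} (hs : 0 ≤ s) (hst : s ≤ t) :
    gaussianPDFReal 0 1 t ≤ gaussianPDFReal 0 1 s := by
  rw [gpdf_eq, gpdf_eq]
  have h1 : (0:ℝ) ≤ (Real.sqrt (2*π))⁻¹ := by positivity
  have h2 : rexp (-t^2/2) ≤ rexp (-s^2/2) := by
    apply Real.exp_le_exp.2; nlinarith
  nlinarith [Real.exp_pos (-t^2/2)]

lemma gpdf_le_zero (x : ℝ) : gaussianPDFReal 0 1 x ≤ gaussianPDFReal 0 1 0 := by
  rw [gpdf_eq, gpdf_eq]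
  have h1 : (0:ℝ) ≤ (Real.sqrt (2*π))⁻¹ := by positivity
  have h2 : rexp (-x^2/2) ≤ rexp (-(0:ℝ)^2/2) := by
    apply Real.exp_le_exp.2; nlinarith
  nlinarith [Real.exp_pos (-x^2/2)]

lemma gauss_Icc_le {a b c : ℝ} (hc0 : 0 ≤ c) (hc : ∀ x ∈ Icc a b, gaussianPDFReal 0 1 x ≤ c) :
    gaussianReal 0 1 (Icc a b) ≤ ENNReal.ofReal ((b-a) * c) := by
  rcases le_or_gt a b with hab | hab
  · rw [gaussianReal_apply _ one_ne_zero]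
    calc ∫⁻ x in Icc a b, gaussianPDF 0 1 x
        ≤ ∫⁻ _ in Icc a b, ENNReal.ofReal c := by
          apply setLIntegral_mono measurable_const
          intro x hx
          exact ENNReal.ofReal_le_ofReal (hc x hx)
      _ = ENNReal.ofReal c * volume (Icc a b) := setLIntegral_const _ _
      _ = ENNReal.ofReal ((b-a) * c) := by
          rw [Real.volume_Icc, ← ENNReal.ofReal_mul hc0, mul_comm]
  · rw [Icc_eq_empty_of_lt hab]
    simp

lemma gauss_Icc_le' {y α c : ℝ} (hc0 : 0 ≤ c)
    (hc : ∀ x ∈ Icc y (y+α), gaussianPDFReal 0 1 x ≤ c) :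
    gaussianReal 0 1 (Icc y (y+α)) ≤ ENNReal.ofReal (α * c) := by
  simpa [add_sub_cancel_left, mul_comm] using gauss_Icc_le hc0 hc

lemma gauss_tail {T : ℝ} (hT : 1 ≤ T) :
    ENNReal.ofReal (gaussianPDFReal 0 1 T * rexp (-(3/2)) / T) ≤ gaussianReal 0 1 (Ioi T) := by
  have hT0 : (0:ℝ) < T := lt_of_lt_of_le one_pos hT
  have hsub : Ioc T (T + 1/T) ⊆ Ioi T := Ioc_subset_Ioi_self
  have key : ENNReal.ofReal (gaussianPDFReal 0 1 (T + 1/T) * (1/T))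
      ≤ gaussianReal 0 1 (Ioc T (T + 1/T)) := by
    rw [gaussianReal_apply _ one_ne_zero]
    have : ∫⁻ _ in Ioc T (T + 1/T), ENNReal.ofReal (gaussianPDFReal 0 1 (T + 1/T))
        ≤ ∫⁻ x in Ioc T (T + 1/T), gaussianPDF 0 1 x := by
      apply setLIntegral_mono (measurable_gaussianPDF 0 1)
      intro x hx
      exact ENNReal.ofReal_le_ofReal (gpdf_anti (by linarith [hx.1]) hx.2)
    refine le_trans ?_ this
    rw [setLIntegral_const, Real.volume_Ioc, ← ENNReal.ofReal_mul (gpdf_nonneg _)]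
    simp
  refine le_trans ?_ (le_trans key (measure_mono hsub))
  apply ENNReal.ofReal_le_ofReal
  rw [gpdf_eq, gpdf_eq]
  have h1 : rexp (-T^2/2) * rexp (-(3/2)) ≤ rexp (-(T + 1/T)^2/2) := by
    rw [← Real.exp_add]
    apply Real.exp_le_exp.2
    have h2 : 1/T ≤ 1 := by rw [div_le_one hT0]; exact hT
    have h3 : (T * (1/T)) = 1 := by field_simp
    nlinarith [sq_nonneg (1/T)]
  have h4 : (0:ℝ) ≤ (Real.sqrt (2*π))⁻¹ := by positivity
  calc (Real.sqrt (2*π))⁻¹ * rexp (-T^2/2) * rexp (-(3/2)) / T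
      = ((Real.sqrt (2*π))⁻¹ * (rexp (-T^2/2) * rexp (-(3/2)))) * (1/T) := by ring
    _ ≤ ((Real.sqrt (2*π))⁻¹ * rexp (-(T+1/T)^2/2)) * (1/T) := by
        have h5 : (0:ℝ) ≤ 1/T := by positivity
        nlinarith [mul_le_mul_of_nonneg_left h1 h4]

lemma key_bound {n : ℕ} (hn : 1 ≤ n) (α : ℝ) (hα : 0 < α)
    (Ω : Type) (mΩ : MeasurableSpace Ω) (P : Measure Ω) (hP : IsProbabilityMeasure P)
    (X : Fin (n+1) → Ω → ℝ) (hXm : ∀ k, Measurable (X k))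
    (hind : iIndepFun X P)
    (hmap : ∀ k, P.map (X k) = gaussianReal 0 1)
    {T : ℝ} (hT : 0 ≤ T) :
    (P {ω | (⨆ k, X k ω) -
        (⨆ p : {p : Fin (n+1) × Fin (n+1) // p.1 ≠ p.2}, min (X p.1.1 ω) (X p.1.2 ω)) ≤ α}).toReal
      ≤ (n+1) * (α * gaussianPDFReal 0 1 T
          + α * gaussianPDFReal 0 1 0 * ((gaussianReal 0 1 (Iic T)).toReal)^n) := by
  classical
  set μ := gaussianReal 0 1 with hμdef
  haveI hne : ∀ i : Fin (n+1), Nonempty ({k // k ∈ ({i}ᶜ : Finset (Fin (n+1)))}) := by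
    intro i
    have hcard : 0 < ({i}ᶜ : Finset (Fin (n+1))).card := by
      rw [Finset.card_compl, Finset.card_singleton, Fintype.card_fin]; omega
    obtain ⟨j, hj⟩ := Finset.card_pos.1 hcard
    exact ⟨⟨j, hj⟩⟩
  set M : Fin (n+1) → Ω → ℝ :=
    fun i ω => ⨆ j : {k // k ∈ ({i}ᶜ : Finset (Fin (n+1)))}, X j.1 ω with hMdef
  have hMm : ∀ i, Measurable (M i) := fun i => Measurable.iSup (fun j => hXm j.1)
  set A : Fin (n+1) → Set Ω := fun i => {ω | M i ω ≤ X i ω ∧ X i ω ≤ M i ω + α} with hAdef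
  -- inclusion
  have hsub : {ω | (⨆ k, X k ω) -
      (⨆ p : {p : Fin (n+1) × Fin (n+1) // p.1 ≠ p.2}, min (X p.1.1 ω) (X p.1.2 ω)) ≤ α}
      ⊆ ⋃ i, A i := by
    intro ω hω
    simp only [mem_setOf_eq] at hω
    obtain ⟨i, hi⟩ := exists_eq_ciSup_of_finite (f := fun k => X k ω)
    have hMle : M i ω ≤ X i ω := by
      refine ciSup_le fun j => ?_
      calc X j.1 ω ≤ ⨆ k, X k ω :=
            le_ciSup (f := fun k => X k ω) (Set.Finite.bddAbove (Set.finite_range _)) j.1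
        _ = X i ω := hi.symm
    refine mem_iUnion.2 ⟨i, hMle, ?_⟩
    haveI : Nonempty {p : Fin (n+1) × Fin (n+1) // p.1 ≠ p.2} :=
      ⟨⟨(⟨0, by omega⟩, ⟨1, by omega⟩), by
        simp only [ne_eq, Prod.mk.injEq]
        intro h
        exact absurd (congrArg Fin.val h) (by norm_num)⟩⟩
    have h2 : (⨆ p : {p : Fin (n+1) × Fin (n+1) // p.1 ≠ p.2},
        min (X p.1.1 ω) (X p.1.2 ω)) ≤ M i ω := by
      refine ciSup_le fun p => ?_
      have hone : ∃ k, k ≠ i ∧ min (X p.1.1 ω) (X p.1.2 ω) ≤ X k ω := by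
        by_cases h : p.1.1 = i
        · refine ⟨p.1.2, ?_, min_le_right _ _⟩
          rw [← h]; exact (p.2).symm
        · exact ⟨p.1.1, h, min_le_left _ _⟩
      obtain ⟨k, hk, hmin⟩ := hone
      refine hmin.trans ?_
      exact le_ciSup (f := fun j : {k // k ∈ ({i}ᶜ : Finset (Fin (n+1)))} => X j.1 ω)
        (Set.Finite.bddAbove (Set.finite_range _))
        (⟨k, by simp [Finset.mem_compl, hk]⟩ : {k // k ∈ ({i}ᶜ : Finset (Fin (n+1)))})
    have hXis : X i ω = ⨆ k, X k ω := hi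
    rw [← hXis] at hω
    linarith
  -- per-index bound
  have hA_bd : ∀ i, P (A i) ≤ ENNReal.ofReal (α * gaussianPDFReal 0 1 T)
      + ENNReal.ofReal (α * gaussianPDFReal 0 1 0) * (μ (Iic T))^n := by
    intro i
    haveI := hne i
    have hIF : IndepFun (X i) (M i) P := by
      have h := hind.indepFun_finset {i} ({i}ᶜ) disjoint_compl_right hXm
      have h2 := h.comp
        (φ := fun v : ({i} : Finset (Fin (n+1))) → ℝ => v ⟨i, Finset.mem_singleton_self i⟩)
        (ψ := fun v : ({i}ᶜ : Finset (Fin (n+1))) → ℝ => ⨆ j, v j)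
        (show Measurable (fun v : ({i} : Finset (Fin (n+1))) → ℝ => v ⟨i, Finset.mem_singleton_self i⟩) from measurable_pi_apply _) (show Measurable (fun v : ({i}ᶜ : Finset (Fin (n+1))) → ℝ => ⨆ j, v j) from Measurable.iSup fun j => measurable_pi_apply j)
      exact h2
    set ν := P.map (M i) with hνdef
    haveI : IsProbabilityMeasure ν := Measure.isProbabilityMeasure_map (hMm i).aemeasurable
    have hTset : MeasurableSet {p : ℝ × ℝ | p.2 ≤ p.1 ∧ p.1 ≤ p.2 + α} :=
      (measurableSet_le measurable_snd measurable_fst).inter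
        (measurableSet_le measurable_fst (measurable_snd.add measurable_const))
    have hpair : P.map (fun ω => (X i ω, M i ω)) = μ.prod ν := by
      have h := (indepFun_iff_map_prod_eq_prod_map_map (hXm i).aemeasurable
        (hMm i).aemeasurable).1 hIF
      rw [h, hmap i]
    have hPA : P (A i) = (μ.prod ν) {p : ℝ × ℝ | p.2 ≤ p.1 ∧ p.1 ≤ p.2 + α} := by
      rw [← hpair, Measure.map_apply ((hXm i).prodMk (hMm i)) hTset]
      rfl
    have hν_Iic : ν (Iic T) = (μ (Iic T))^n := by
      rw [hνdef, Measure.map_apply (hMm i) measurableSet_Iic]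
      have hset : M i ⁻¹' Iic T = ⋂ k ∈ ({i}ᶜ : Finset (Fin (n+1))), X k ⁻¹' Iic T := by
        ext ω
        simp only [mem_preimage, mem_Iic, mem_iInter]
        constructor
        · intro h k hk
          exact le_trans (le_ciSup
            (f := fun j : {k // k ∈ ({i}ᶜ : Finset (Fin (n+1)))} => X j.1 ω)
            (Set.Finite.bddAbove (Set.finite_range _)) ⟨k, hk⟩) h
        · intro h
          exact ciSup_le fun j => h j.1 j.2
      rw [hset, hind.meas_biInter (fun k _ => ⟨Iic T, measurableSet_Iic, rfl⟩)]
      have hPk : ∀ k, P (X k ⁻¹' Iic T) = μ (Iic T) := fun k => by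
        rw [← Measure.map_apply (hXm k) measurableSet_Iic, hmap k]
      rw [Finset.prod_congr rfl (fun k _ => hPk k), Finset.prod_const,
        Finset.card_compl, Finset.card_singleton, Fintype.card_fin]
      norm_num
    have hbd : ∀ y : ℝ, μ ((fun x => (x, y)) ⁻¹' {p : ℝ × ℝ | p.2 ≤ p.1 ∧ p.1 ≤ p.2 + α})
        ≤ ENNReal.ofReal (α * gaussianPDFReal 0 1 T)
          + (Iic T).indicator (fun _ => ENNReal.ofReal (α * gaussianPDFReal 0 1 0)) y := by
      intro y
      have hpre : (fun x => (x, y)) ⁻¹' {p : ℝ × ℝ | p.2 ≤ p.1 ∧ p.1 ≤ p.2 + α}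
          = Icc y (y + α) := by
        rfl
      rw [hpre]
      by_cases hy : y ≤ T
      · rw [indicator_of_mem (mem_Iic.2 hy)]
        calc μ (Icc y (y+α)) ≤ ENNReal.ofReal (α * gaussianPDFReal 0 1 0) :=
              gauss_Icc_le' (gpdf_nonneg 0) (fun x _ => gpdf_le_zero x)
          _ ≤ _ := le_add_self
      · rw [indicator_of_notMem (by simpa using hy), add_zero]
        refine gauss_Icc_le' (gpdf_nonneg T) (fun x hx => gpdf_anti hT ?_)
        have hTy : T ≤ y := le_of_not_ge hy
        linarith [hx.1]
    calc P (A i) = ∫⁻ y, μ ((fun x => (x, y)) ⁻¹' {p : ℝ × ℝ | p.2 ≤ p.1 ∧ p.1 ≤ p.2 + α}) ∂ν := by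
          rw [hPA, Measure.prod_apply_symm hTset]
      _ ≤ ∫⁻ y, (ENNReal.ofReal (α * gaussianPDFReal 0 1 T)
            + (Iic T).indicator (fun _ => ENNReal.ofReal (α * gaussianPDFReal 0 1 0)) y) ∂ν :=
          lintegral_mono hbd
      _ = ENNReal.ofReal (α * gaussianPDFReal 0 1 T)
            + ENNReal.ofReal (α * gaussianPDFReal 0 1 0) * ν (Iic T) := by
          rw [lintegral_add_left measurable_const, lintegral_const, measure_univ, mul_one,
            lintegral_indicator measurableSet_Iic, setLIntegral_const]
      _ = _ := by rw [hν_Iic]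
  -- sum up
  set c := ENNReal.ofReal (α * gaussianPDFReal 0 1 T)
      + ENNReal.ofReal (α * gaussianPDFReal 0 1 0) * (μ (Iic T))^n with hcdef
  have htotal : P {ω | (⨆ k, X k ω) -
      (⨆ p : {p : Fin (n+1) × Fin (n+1) // p.1 ≠ p.2}, min (X p.1.1 ω) (X p.1.2 ω)) ≤ α}
      ≤ (n+1) • c := by
    refine (measure_mono hsub).trans ((measure_iUnion_fintype_le _ _).trans ?_)
    calc ∑ i, P (A i) ≤ ∑ _i : Fin (n+1), c := Finset.sum_le_sum (fun i _ => hA_bd i)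
      _ = (n+1) • c := by rw [Finset.sum_const, Finset.card_univ, Fintype.card_fin]
  have hceq : (n+1) • c = ENNReal.ofReal (((n:ℝ)+1) * (α * gaussianPDFReal 0 1 T
      + α * gaussianPDFReal 0 1 0 * ((μ (Iic T)).toReal)^n)) := by
    have h1 : μ (Iic T) = ENNReal.ofReal ((μ (Iic T)).toReal) :=
      (ENNReal.ofReal_toReal (measure_ne_top _ _)).symm
    rw [hcdef, h1, ← ENNReal.ofReal_pow ENNReal.toReal_nonneg,
      ← ENNReal.ofReal_mul (mul_nonneg hα.le (gpdf_nonneg 0)),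
      ← ENNReal.ofReal_add (mul_nonneg hα.le (gpdf_nonneg T))
        (mul_nonneg (mul_nonneg hα.le (gpdf_nonneg 0)) (pow_nonneg ENNReal.toReal_nonneg n)),
      nsmul_eq_mul]
    rw [show ((n+1 : ℕ) : ENNReal) = ENNReal.ofReal ((n:ℝ)+1) by
      rw [← ENNReal.ofReal_natCast]; norm_num]
    rw [← ENNReal.ofReal_mul (by positivity)]
    rw [ENNReal.toReal_ofReal ENNReal.toReal_nonneg]
  rw [hceq] at htotal
  have hb0 : (0:ℝ) ≤ ((n:ℝ)+1) * (α * gaussianPDFReal 0 1 T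
      + α * gaussianPDFReal 0 1 0 * ((μ (Iic T)).toReal)^n) :=
    mul_nonneg (by positivity) (add_nonneg (mul_nonneg hα.le (gpdf_nonneg T))
      (mul_nonneg (mul_nonneg hα.le (gpdf_nonneg 0)) (pow_nonneg ENNReal.toReal_nonneg n)))
  exact ENNReal.toReal_le_of_le_ofReal hb0 htotal

lemma sqrt_two_pi_bounds : 2.5 ≤ Real.sqrt (2*π) ∧ Real.sqrt (2*π) ≤ 2.51 := by
  have h1 : (6.28:ℝ) ≤ 2*π := by nlinarith [Real.pi_gt_d2]
  have h2 : 2*π ≤ 6.3 := by nlinarith [Real.pi_lt_d2]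
  have h3 := Real.sq_sqrt (by linarith : (0:ℝ) ≤ 2*π)
  have h4 := Real.sqrt_nonneg (2*π)
  constructor <;> nlinarith

lemma gpdf_zero_le : gaussianPDFReal 0 1 0 ≤ 0.4 := by
  rw [gpdf_eq]
  have h1 := sqrt_two_pi_bounds
  have h4 := Real.sqrt_nonneg (2*π)
  have h5 : rexp (-(0:ℝ)^2/2) = 1 := by norm_num
  rw [h5, mul_one]
  have h6 : (0:ℝ) < 2.5 := by norm_num
  calc (Real.sqrt (2*π))⁻¹ ≤ (2.5:ℝ)⁻¹ := by
        apply inv_anti₀ h6 h1.1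
    _ ≤ 0.4 := by norm_num

lemma prob_toReal_le_one {μ : Measure ℝ} [IsProbabilityMeasure μ] (s : Set ℝ) :
    (μ s).toReal ≤ 1 := by
  refine ENNReal.toReal_le_of_le_ofReal zero_le_one ?_
  simpa using prob_le_one (μ := μ) (s := s)


lemma small_arith {x L α : ℝ} (hα : 0 ≤ α) (hxle : x ≤ Real.exp 60) (hL : 0.25 ≤ L) :
    0.8*x*α ≤ Real.exp 70 * L * α := by
  have hsplit : Real.exp 70 = Real.exp 60 * Real.exp 10 := by
    rw [← Real.exp_add]; norm_num
  have h10 : (11:ℝ) ≤ Real.exp 10 := by nlinarith [Real.add_one_le_exp (10:ℝ)]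
  have h60 : (0:ℝ) < Real.exp 60 := Real.exp_pos _
  have key : 0.8*x ≤ Real.exp 70 * L := by
    have h1 : Real.exp 60 * 11 ≤ Real.exp 60 * Real.exp 10 :=
      mul_le_mul_of_nonneg_left h10 h60.le
    have h2 : Real.exp 70 * 0.25 ≤ Real.exp 70 * L :=
      mul_le_mul_of_nonneg_left hL (Real.exp_pos 70).le
    nlinarith
  nlinarith [mul_le_mul_of_nonneg_right key hα]

lemma branch_small {g Φn K α L : ℝ} (hα : 0 ≤ α) (hg0 : 0 ≤ g) (hg : g ≤ 0.4)
    (hΦ0 : 0 ≤ Φn) (hΦ : Φn ≤ 1) (hK0 : 0 ≤ K) (hK : K ≤ Real.exp 60) (hL : 0.25 ≤ L) :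
    K * (α * g + α * g * Φn) ≤ Real.exp 70 * L * α := by
  have e1 : α * g ≤ 0.4 * α := by nlinarith
  have e2 : α * g * Φn ≤ 0.4 * α := by nlinarith [mul_nonneg hα hg0]
  have hsum : α * g + α * g * Φn ≤ 0.8 * α := by linarith
  have h1 : K * (α * g + α * g * Φn) ≤ K * (0.8 * α) := mul_le_mul_of_nonneg_left hsum hK0
  have h2 : K * (0.8*α) = 0.8 * K * α := by ring
  linarith [small_arith hα hK hL]

lemma branch_large {gT g0 Φn K α L : ℝ} (hα : 0 ≤ α) (h1 : K * gT ≤ 16 * L)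
    (h2 : K * (g0 * Φn) ≤ 0.4) (hL : 1 ≤ L) :
    K * (α * gT + α * g0 * Φn) ≤ Real.exp 70 * L * α := by
  have h70 : (71:ℝ) ≤ Real.exp 70 := by nlinarith [Real.add_one_le_exp (70:ℝ)]
  have e : K * (α * gT + α * g0 * Φn) = α * (K * gT) + α * (K * (g0 * Φn)) := by ring
  rw [e]
  have f1 : α * (K * gT) ≤ α * (16 * L) := mul_le_mul_of_nonneg_left h1 hα
  have f2 : α * (K * (g0*Φn)) ≤ α * 0.4 := mul_le_mul_of_nonneg_left h2 hα
  have g1 : (16*L : ℝ) + 0.4 ≤ 71*L := by linarith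
  have g2 : (71:ℝ)*L ≤ Real.exp 70 * L := mul_le_mul_of_nonneg_right h70 (by linarith)
  have g3 : α * (16*L) + α*0.4 ≤ α * (Real.exp 70 * L) := by nlinarith
  have g4 : α * (Real.exp 70 * L) = Real.exp 70 * L * α := by ring
  linarith

lemma large_key {sp L K T Q s : ℝ} (hsp : 2.5 ≤ sp) (hsp' : sp ≤ 2.51)
    (hK2 : 2 ≤ K) (hL : L = s^3) (hs : 7.7 ≤ s)
    (hT1 : 1 ≤ T) (hTs : T ≤ 1.42*s)
    (hQ : sp⁻¹ * (40*L/K) * 0.22 / T ≤ Q) (hQ0 : 0 ≤ Q) :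
    s^2 ≤ (K - 1) * Q := by
  have hs0 : (0:ℝ) < s := by linarith
  have hT0 : (0:ℝ) < T := by linarith
  have hsp0 : (0:ℝ) < sp := by linarith
  have hK0 : (0:ℝ) < K := by linarith
  have hg : sp⁻¹ * (40*L/K) * 0.22 / T = 8.8 * s^3/(K * sp * T) := by
    rw [hL]; field_simp; ring
  have hKn : K/2 ≤ K - 1 := by linarith
  have hQpos : (0:ℝ) ≤ 8.8*s^3/(K*sp*T) := by positivity
  have h1 : (K/2) * (8.8*s^3/(K*sp*T)) ≤ (K-1) * Q := by
    apply mul_le_mul hKn _ hQpos (by linarith)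
    rw [← hg]; exact hQ
  have hrhs : (K/2) * (8.8*s^3/(K*sp*T)) = 4.4*s^3/(sp*T) := by field_simp; ring
  rw [hrhs] at h1
  have hden : (0:ℝ) < sp*T := by positivity
  have hdenle : sp*T ≤ 3.5642*s := by nlinarith
  have h2 : 4.4*s^3/(3.5642*s) ≤ 4.4*s^3/(sp*T) :=
    div_le_div_of_nonneg_left (by positivity) hden hdenle
  have h3 : 4.4*s^3/(3.5642*s) = (4.4/3.5642)*s^2 := by field_simp
  nlinarith [h1, h2]


lemma sqrt_ub {x c : ℝ} (hc : 0 ≤ c) (h : x ≤ c^2) : Real.sqrt x ≤ c := by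
  rw [show c = Real.sqrt (c^2) from (Real.sqrt_sq hc).symm]
  exact Real.sqrt_le_sqrt h

lemma exp_half_le : Real.exp (1/2:ℝ) ≤ 2.72 := by
  have h := Real.exp_le_exp.2 (by norm_num : (1/2:ℝ) ≤ 1)
  nlinarith [Real.exp_one_lt_d9]

lemma exp_neg32_ge : (0.22:ℝ) ≤ rexp (-(3/2)) := by
  have h3 : Real.exp 3 ≤ 20.1 := by
    have hh : Real.exp 3 = (Real.exp 1)^3 := by
      rw [← Real.exp_nat_mul]; norm_num
    have h1 : Real.exp 1 ≤ 2.7182818286 := le_of_lt Real.exp_one_lt_d9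
    have h2 : (Real.exp 1)^3 ≤ 2.7182818286^3 :=
      pow_le_pow_left₀ (Real.exp_pos 1).le h1 3
    rw [hh]
    calc (Real.exp 1)^3 ≤ 2.7182818286^3 := h2
      _ ≤ 20.1 := by norm_num
  have h32 : rexp (3/2:ℝ) ≤ 4.49 := by
    have hsq2 : rexp (3/2:ℝ)^2 = Real.exp 3 := by
      rw [pow_two, ← Real.exp_add]; norm_num
    nlinarith [Real.exp_pos (3/2:ℝ)]
  have hinv : rexp (-(3/2:ℝ)) * rexp (3/2:ℝ) = 1 := by
    rw [← Real.exp_add]; norm_num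
  nlinarith [Real.exp_pos (-(3/2:ℝ)), Real.exp_pos (3/2:ℝ)]

lemma large_K_bound {s Kv : ℝ} (hs : 7.7 ≤ s) (h5 : (s^2/5)^5 ≤ Kv) :
    Real.exp (1/2) * (40 * s^3) ≤ Kv := by
  have hs0 : (0:ℝ) < s := by linarith
  have h7 : (7.7:ℝ)^7 ≤ s^7 := pow_le_pow_left₀ (by norm_num) hs 7
  have c2 : (7.7:ℝ)^7 * s^3 ≤ s^7 * s^3 :=
    mul_le_mul_of_nonneg_right h7 (pow_nonneg hs0.le 3)
  have c3 : (340000:ℝ) * s^3 ≤ (7.7:ℝ)^7 * s^3 :=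
    mul_le_mul_of_nonneg_right (by norm_num) (pow_nonneg hs0.le 3)
  have c4 : (s^2/5)^5 = s^7 * s^3 / 3125 := by ring
  have c5 : Real.exp (1/2) * (40*s^3) ≤ 2.72 * (40*s^3) :=
    mul_le_mul_of_nonneg_right exp_half_le (by positivity)
  nlinarith [c2, c3, c5]

set_option maxHeartbeats 2000000 in
/-- There is a constant `C > 0` such that for all `K ≥ 2` and `α > 0`, the gap between the
largest and second-largest of `K` i.i.d. standard Gaussians satisfies
`P(X_(1) − X_(2) ≤ α) ≤ C (ln K)^(3/2) α`. -/
theorem gaussian_top_two_gap_bound :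
    ∃ C : ℝ, 0 < C ∧
      ∀ (K : ℕ), 2 ≤ K → ∀ α : ℝ, 0 < α →
      ∀ (Ω : Type) (_ : MeasurableSpace Ω) (P : Measure Ω), IsProbabilityMeasure P →
      ∀ (X : Fin K → Ω → ℝ), (∀ k, Measurable (X k)) →
        iIndepFun X P →
        (∀ k, P.map (X k) = gaussianReal 0 1) →
        (P {ω | (⨆ k, X k ω) -
            (⨆ p : {p : Fin K × Fin K // p.1 ≠ p.2}, min (X p.1.1 ω) (X p.1.2 ω)) ≤ α}).toReal
          ≤ C * Real.log K ^ ((3 : ℝ) / 2) * α := by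
  refine ⟨Real.exp 70, Real.exp_pos 70, ?_⟩
  intro K hK α hα Ω mΩ P hP X hXm hind hmap
  obtain ⟨n, rfl⟩ : ∃ n, K = n + 1 := ⟨K - 1, by omega⟩
  have hn : 1 ≤ n := by omega
  have hKr0 : (0:ℝ) < ((n:ℝ) + 1) := by positivity
  have hn1 : (1:ℝ) ≤ (n:ℝ) := by exact_mod_cast hn
  have hKr2 : (2:ℝ) ≤ (n:ℝ) + 1 := by linarith
  set u := Real.log ((n+1 : ℕ) : ℝ) with hu
  have hu' : u = Real.log ((n:ℝ)+1) := by rw [hu]; push_cast; ring_nf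
  have hulog2 : Real.log 2 ≤ u := by
    rw [hu']; exact Real.log_le_log (by norm_num) hKr2
  have hu0 : (0:ℝ) < u := by linarith [Real.log_two_gt_d9]
  have hKexp : (n:ℝ)+1 = Real.exp u := by rw [hu']; exact (Real.exp_log hKr0).symm
  rcases lt_or_ge u 60 with hsmall | hbig
  · -- small K branch, use T = 0
    refine (key_bound hn α hα Ω mΩ P hP X hXm hind hmap (T := (0:ℝ)) le_rfl).trans ?_
    set Φ0 := (gaussianReal 0 1 (Iic (0:ℝ))).toReal with hΦ0def
    have hΦ01 : Φ0 ≤ 1 := prob_toReal_le_one _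
    have hΦ00 : 0 ≤ Φ0 := ENNReal.toReal_nonneg
    have hΦpow : Φ0^n ≤ 1 := pow_le_one₀ hΦ00 hΦ01
    have hΦpow0 : 0 ≤ Φ0^n := pow_nonneg hΦ00 n
    have hKle : (n:ℝ)+1 ≤ Real.exp 60 := by
      rw [hKexp]; exact Real.exp_le_exp.2 hsmall.le
    have hL1 : (0.25:ℝ) ≤ u ^ ((3:ℝ)/2) := by
      have h69 : (0.69:ℝ) ≤ u := by linarith [Real.log_two_gt_d9]
      calc (0.25:ℝ) ≤ (0.69:ℝ) ^ ((2:ℕ):ℝ) := by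
            rw [Real.rpow_natCast]; norm_num
        _ ≤ (0.69:ℝ) ^ ((3:ℝ)/2) :=
            Real.rpow_le_rpow_of_exponent_ge (by norm_num) (by norm_num) (by norm_num)
        _ ≤ u ^ ((3:ℝ)/2) := Real.rpow_le_rpow (by norm_num) h69 (by norm_num)
    exact branch_small hα.le (gpdf_nonneg 0) gpdf_zero_le hΦpow0 hΦpow hKr0.le hKle hL1
  · -- large K branch
    set s := Real.sqrt u with hs
    have hu0' : (0:ℝ) ≤ u := hu0.le
    have hs2 : s^2 = u := Real.sq_sqrt hu0'
    have hs0 : 0 < s := Real.sqrt_pos.2 hu0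
    have hs77 : (7.7:ℝ) ≤ s := by
      have h1 : Real.sqrt 59.29 ≤ s := by
        rw [hs]; exact Real.sqrt_le_sqrt (by linarith)
      have h2 : Real.sqrt 59.29 = 7.7 := by
        rw [show (59.29:ℝ) = 7.7^2 by norm_num, Real.sqrt_sq (by norm_num)]
      linarith
    set L := u ^ ((3:ℝ)/2) with hL
    have hLs : L = s^3 := by
      rw [hL, ← hs2, ← Real.rpow_natCast s 2, ← Real.rpow_mul hs0.le,
        show ((2:ℕ):ℝ) * ((3:ℝ)/2) = ((3:ℕ):ℝ) by norm_num, Real.rpow_natCast]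
    have hL1 : 1 ≤ L := by
      rw [hLs]
      have h1 : (7.7:ℝ)^3 ≤ s^3 := pow_le_pow_left₀ (by norm_num) hs77 3
      nlinarith
    have hL0 : (0:ℝ) < L := by linarith
    have hKr5 : (u/5)^5 ≤ (n:ℝ)+1 := by
      have hh : Real.exp u = (Real.exp (u/5))^5 := by
        rw [← Real.exp_nat_mul]; congr 1; push_cast; ring
      have h6 : u/5 ≤ Real.exp (u/5) := by linarith [Real.add_one_le_exp (u/5)]
      calc (u/5)^5 ≤ (Real.exp (u/5))^5 := pow_le_pow_left₀ (by linarith) h6 5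
        _ = Real.exp u := hh.symm
        _ = (n:ℝ)+1 := hKexp.symm
    have hKrlarge : Real.exp (1/2) * (40 * L) ≤ (n:ℝ)+1 := by
      rw [hLs]
      refine large_K_bound hs77 ?_
      rw [hs2]
      exact hKr5
    have hx0 : (0:ℝ) < ((n:ℝ)+1) / (40*L) := by positivity
    have hW : (1/2:ℝ) ≤ Real.log (((n:ℝ)+1)/(40*L)) := by
      rw [Real.le_log_iff_exp_le hx0, le_div_iff₀ (by positivity)]
      linarith [hKrlarge]
    set W := Real.log (((n:ℝ)+1)/(40*L)) with hWdef
    have hW0 : (0:ℝ) ≤ 2*W := by linarith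
    set T := Real.sqrt (2*W) with hTdef
    have hT2 : T^2 = 2*W := Real.sq_sqrt hW0
    have hT0 : (0:ℝ) ≤ T := Real.sqrt_nonneg _
    have hT1 : 1 ≤ T := by
      have h1 : Real.sqrt 1 ≤ T := by rw [hTdef]; exact Real.sqrt_le_sqrt (by linarith)
      rwa [Real.sqrt_one] at h1
    have hT0' : (0:ℝ) < T := by linarith
    have hWu : W ≤ u := by
      rw [hWdef, hu']
      exact Real.log_le_log hx0 (div_le_self (by linarith) (by linarith))
    have hTs : T ≤ 1.42*s := by
      rw [hTdef]
      refine sqrt_ub (by positivity) ?_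
      have h1 : (1.42*s)^2 = 2.0164*(s^2) := by ring
      rw [h1, hs2]
      linarith
    have hgT : gaussianPDFReal 0 1 T = (Real.sqrt (2*π))⁻¹ * (40*L/((n:ℝ)+1)) := by
      rw [gpdf_eq]
      congr 1
      rw [show -T^2/2 = -W by rw [hT2]; ring, Real.exp_neg, hWdef, Real.exp_log hx0, inv_div]
    refine (key_bound hn α hα Ω mΩ P hP X hXm hind hmap (T := T) hT0).trans ?_
    set Q := (gaussianReal 0 1 (Ioi T)).toReal with hQdef
    set Φ := (gaussianReal 0 1 (Iic T)).toReal with hΦdef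
    have hQlb : gaussianPDFReal 0 1 T * rexp (-(3/2)) / T ≤ Q := by
      have hgt := gauss_tail hT1
      exact (ENNReal.ofReal_le_iff_le_toReal (measure_ne_top _ _)).1 hgt
    have hQ0 : 0 ≤ Q := ENNReal.toReal_nonneg
    have hΦ0 : 0 ≤ Φ := ENNReal.toReal_nonneg
    have hΦQ : Φ + Q = 1 := by
      have hun : (gaussianReal 0 1) (Iic T) + (gaussianReal 0 1) (Ioi T) = 1 := by
        rw [← measure_union (Iic_disjoint_Ioi le_rfl) measurableSet_Ioi, Iic_union_Ioi,
          measure_univ]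
      have h2 := congrArg ENNReal.toReal hun
      rw [ENNReal.toReal_add (measure_ne_top _ _) (measure_ne_top _ _)] at h2
      simpa using h2
    have hsqpi := sqrt_two_pi_bounds
    have hsqpi0 : (0:ℝ) < Real.sqrt (2*π) := by linarith [hsqpi.1]
    have hexp32 : (0.22:ℝ) ≤ rexp (-(3/2)) := exp_neg32_ge
    have hQlb2 : (Real.sqrt (2*π))⁻¹ * (40*L/((n:ℝ)+1)) * 0.22 / T ≤ Q := by
      refine le_trans ?_ hQlb
      rw [hgT]
      apply (div_le_div_iff_of_pos_right hT0').2
      exact mul_le_mul_of_nonneg_left hexp32 (by positivity)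
    have hkey : s^2 ≤ (((n:ℝ)+1) - 1) * Q :=
      large_key hsqpi.1 hsqpi.2 hKr2 hLs hs77 hT1 hTs hQlb2 hQ0
    have hkey' : u ≤ (n:ℝ) * Q := by
      rw [← hs2]
      have : (((n:ℝ)+1) - 1) = (n:ℝ) := by ring
      rw [this] at hkey
      exact hkey
    -- Φ^n ≤ 1/(n+1)
    have hΦn : Φ^n ≤ ((n:ℝ)+1)⁻¹ := by
      have h1 : Φ ≤ Real.exp (-Q) := by
        have := Real.add_one_le_exp (-Q)
        linarith
      have h2 : Φ^n ≤ (Real.exp (-Q))^n := pow_le_pow_left₀ hΦ0 h1 n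
      have h3 : (Real.exp (-Q))^n = Real.exp ((n:ℝ)*(-Q)) := (Real.exp_nat_mul (-Q) n).symm
      have h4 : Real.exp ((n:ℝ)*(-Q)) ≤ Real.exp (-u) := by
        apply Real.exp_le_exp.2
        have he : ((n:ℝ))*(-Q) = -((n:ℝ)*Q) := by ring
        rw [he]
        linarith [hkey']
      have h5 : Real.exp (-u) = ((n:ℝ)+1)⁻¹ := by
        rw [Real.exp_neg, ← hKexp]
      calc Φ^n ≤ (Real.exp (-Q))^n := h2
        _ = Real.exp ((n:ℝ)*(-Q)) := h3
        _ ≤ Real.exp (-u) := h4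
        _ = ((n:ℝ)+1)⁻¹ := h5
    have hterm1 : ((n:ℝ)+1) * gaussianPDFReal 0 1 T ≤ 16*L := by
      rw [hgT]
      have e : ((n:ℝ)+1) * ((Real.sqrt (2*π))⁻¹ * (40*L/((n:ℝ)+1)))
          = 40*L/Real.sqrt (2*π) := by
        field_simp
      rw [e, div_le_iff₀ hsqpi0]
      have h8 : 16*L*2.5 ≤ 16*L*Real.sqrt (2*π) :=
        mul_le_mul_of_nonneg_left hsqpi.1 (by linarith)
      linarith
    have hterm2 : ((n:ℝ)+1) * (gaussianPDFReal 0 1 0 * Φ^n) ≤ 0.4 := by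
      have h6 : ((n:ℝ)+1)*Φ^n ≤ 1 := by
        calc ((n:ℝ)+1)*Φ^n ≤ ((n:ℝ)+1)*((n:ℝ)+1)⁻¹ :=
              mul_le_mul_of_nonneg_left hΦn hKr0.le
          _ = 1 := mul_inv_cancel₀ (ne_of_gt hKr0)
      have h7 : gaussianPDFReal 0 1 0 * (((n:ℝ)+1)*Φ^n) ≤ 0.4*1 :=
        mul_le_mul gpdf_zero_le h6 (mul_nonneg hKr0.le (pow_nonneg hΦ0 n)) (by norm_num)
      have he : ((n:ℝ)+1) * (gaussianPDFReal 0 1 0 * Φ^n)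
          = gaussianPDFReal 0 1 0 * (((n:ℝ)+1)*Φ^n) := by ring
      rw [he]
      linarith
    exact branch_large hα.le hterm1 hterm2 hL1
end

section
/- Posterior variance is strictly smaller than sample-mean variance: with the notation τ_k² = w_kσ²/T_k + (1−w_k)²σ²/(Σ_j T_j(1−w_j)) where w_k = σ₀²/(σ₀² + σ²/T_k), if σ² > 0, σ₀² > 0, K ≥ 2, and each T_j ≥ 1, then τ_k² < σ²/T_k. -/
open Finset

/-- The posterior variance in the random-effect model is strictly smaller than the variance of
the plain sample average: `τ_k² < σ²/T_k`. -/
theorem posterior_variance_lt_sample_variance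
    (K : ℕ) (hK : 2 ≤ K) (σ0sq σsq : ℝ) (hσ0 : 0 < σ0sq) (hσ : 0 < σsq)
    (T : Fin K → ℝ) (hT : ∀ j, 1 ≤ T j)
    (w : Fin K → ℝ) (hw : ∀ j, w j = σ0sq / (σ0sq + σsq / T j))
    (τsq : Fin K → ℝ)
    (hτ : ∀ k, τsq k = w k * σsq / T k
        + (1 - w k) ^ 2 * σsq / (∑ j, T j * (1 - w j))) (k : Fin K) :
    τsq k < σsq / T k := by
  have hTpos : ∀ j, (0:ℝ) < T j := fun j => lt_of_lt_of_le one_pos (hT j)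
  have hd : ∀ j, (0:ℝ) < σ0sq + σsq / T j := fun j =>
    add_pos hσ0 (div_pos hσ (hTpos j))
  have hw1 : ∀ j, 1 - w j = (σsq / T j) / (σ0sq + σsq / T j) := by
    intro j
    have h1 := (hd j).ne'
    have h2 := (hTpos j).ne'
    have h3 : σ0sq * T j + σsq ≠ 0 := (add_pos (mul_pos hσ0 (hTpos j)) hσ).ne'
    rw [hw j]
    field_simp
    ring
  have hw1pos : ∀ j, 0 < 1 - w j := fun j => by
    rw [hw1 j]; exact div_pos (div_pos hσ (hTpos j)) (hd j)
  have hterm : ∀ j, 0 < T j * (1 - w j) := fun j => mul_pos (hTpos j) (hw1pos j)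
  -- the sum is strictly bigger than the single term
  obtain ⟨j, hj⟩ : ∃ j : Fin K, j ≠ k := by
    have : Nontrivial (Fin K) := Fin.nontrivial_iff_two_le.mpr hK
    exact exists_ne k
  have hS : T k * (1 - w k) < ∑ j, T j * (1 - w j) := by
    refine Finset.single_lt_sum hj (Finset.mem_univ k) (Finset.mem_univ j)
      (hterm j) (fun i _ _ => (hterm i).le)
  have hSpos : 0 < ∑ j, T j * (1 - w j) := lt_trans (hterm k) hS
  rw [hτ k]
  have key : (1 - w k) ^ 2 * σsq / (∑ j, T j * (1 - w j)) < (1 - w k) * σsq / T k := by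
    rw [div_lt_div_iff₀ hSpos (hTpos k)]
    have h1 : (1 - w k) ^ 2 * σsq * T k = ((1 - w k) * σsq) * (T k * (1 - w k)) := by ring
    rw [h1]
    exact mul_lt_mul_of_pos_left hS (mul_pos (hw1pos k) hσ)
  have : w k * σsq / T k + (1 - w k) * σsq / T k = σsq / T k := by
    field_simp
    ring
  linarith
end
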